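/- Consider the F^{(α)}-potential φ(ξ) = -log ∫ (1 + α ξ·h(x))^{-1/α} dμ(x) for α > 0, where μ is a probability measure and h : X → ℝ₊₊^d. Under regularity (finiteness, 1 + α ξ·h > 0 on Ω, differentiation under the integral sign), the Hessian of Φ = e^{αφ} is ∂²Φ/∂ξⁱ∂ξʲ = -α(1+α) Φ(ξ) Cov_ξ(Z_ξⁱ, Z_ξʲ), where Z_ξ = h(X)/(1 + α ξ·h(X)) and the covariance is under the density p(x,ξ) = (1 + α ξ·h(x))^{-1/α} e^{φ(ξ)}. In particular Φ is concave, so φ is α-exponentially concave on Ω. -/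

import Mathlib

/-!
Write `G = Fint`, so that `Φ = e^{αφ} = G^{-α}` where `G > 0`. Along a line `t ↦ ξ + t v`,
`G' = -M₁` and `M₁' = -(1 + α) M₂` (differentiation under the integral sign), hence
`Φ' = α Φ M₁ / G` and `Φ'' = -α (1 + α) Φ (M₂ / G - (M₁ / G)²)`. Since `M₁ / G` and `M₂ / G` are
the first two moments of `v·Z_ξ` under the density `p(·, ξ)`, the bracket is a variance, so
`Φ'' ≤ 0` on every segment of `Ω` and `Φ` is concave.
-/

open scoped RealInnerProductSpace
open MeasureTheory

/-- The normalizing integral of the `F^{(α)}`-family. -/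
noncomputable def Fint {d : ℕ} {X : Type*} [MeasurableSpace X] (μ : Measure X)
    (α : ℝ) (h : X → EuclideanSpace ℝ (Fin d))
    (ξ : EuclideanSpace ℝ (Fin d)) : ℝ :=
  ∫ x, (1 + α * ⟪ξ, h x⟫) ^ (-(1/α)) ∂μ

/-- The `F^{(α)}`-potential `φ(ξ) = -log ∫ (1 + α ξ·h)^{-1/α} dμ`. -/
noncomputable def Fpot {d : ℕ} {X : Type*} [MeasurableSpace X] (μ : Measure X)
    (α : ℝ) (h : X → EuclideanSpace ℝ (Fin d))
    (ξ : EuclideanSpace ℝ (Fin d)) : ℝ :=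
  -Real.log (Fint μ α h ξ)

/-- The density `p(x,ξ) = (1 + α ξ·h(x))^{-1/α} e^{φ(ξ)}` of the `F^{(α)}`-family. -/
noncomputable def Fdens {d : ℕ} {X : Type*} [MeasurableSpace X] (μ : Measure X)
    (α : ℝ) (h : X → EuclideanSpace ℝ (Fin d))
    (ξ : EuclideanSpace ℝ (Fin d)) (x : X) : ℝ :=
  (1 + α * ⟪ξ, h x⟫) ^ (-(1/α)) * Real.exp (Fpot μ α h ξ)

/-- `v·Z_ξ` where `Z_ξ = h(X)/(1 + α ξ·h(X))`. -/
noncomputable def Zstat {d : ℕ} {X : Type*} (α : ℝ)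
    (h : X → EuclideanSpace ℝ (Fin d))
    (ξ v : EuclideanSpace ℝ (Fin d)) (x : X) : ℝ :=
  ⟪v, h x⟫ / (1 + α * ⟪ξ, h x⟫)

open scoped Topology

section LineRestriction

variable {E : Type*} [AddCommGroup E] [Module ℝ E]

theorem HasDerivAt.of_line_shift {F : E → ℝ} {ξ v : E} {D t : ℝ}
    (hd : HasDerivAt (fun s : ℝ => F (ξ + t • v + s • v)) D 0) :
    HasDerivAt (fun s : ℝ => F (ξ + s • v)) D t := by
  have hshift : (fun s : ℝ => F (ξ + s • v)) = fun s => F (ξ + t • v + (s + -t) • v) :=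
    funext fun s => by congr 1; module
  rw [hshift]
  exact HasDerivAt.comp_add_const t (-t) (by rwa [add_neg_cancel])

theorem Convex.line_preimage {Ω : Set E} (hconv : Convex ℝ Ω) (x v : E) :
    Convex ℝ {t : ℝ | x + t • v ∈ Ω} := by
  have hline : {t : ℝ | x + t • v ∈ Ω} = AffineMap.lineMap x (x + v) ⁻¹' Ω := by
    ext t
    simp [AffineMap.lineMap_apply, add_comm]
  rw [hline]
  exact hconv.affine_preimage _

theorem concaveOn_of_concaveOn_line {Ω : Set E} {f : E → ℝ} (hconv : Convex ℝ Ω)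
    (hline : ∀ x ∈ Ω, ∀ v : E, ConcaveOn ℝ {t : ℝ | x + t • v ∈ Ω} fun t => f (x + t • v)) :
    ConcaveOn ℝ Ω f := by
  refine ⟨hconv, fun x hx y hy a b ha hb hab => ?_⟩
  have h0 : x + (0 : ℝ) • (y - x) ∈ Ω := by simpa using hx
  have h1 : x + (1 : ℝ) • (y - x) ∈ Ω := by simpa using hy
  have hb' : x + b • (y - x) = a • x + b • y := by
    rw [eq_sub_of_add_eq hab]; module
  simpa [hb'] using (hline x hx (y - x)).2 h0 h1 ha hb hab

end LineRestriction

section SecondDirectionalDerivative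

variable {E : Type*} [AddCommGroup E] [Module ℝ E] [TopologicalSpace E] [ContinuousAdd E]
  [ContinuousSMul ℝ E] {Ω : Set E} {f : E → ℝ} {f' f'' : E → E → ℝ}

theorem hasDerivAt_deriv_line (hΩ : IsOpen Ω)
    (hf' : ∀ ξ ∈ Ω, ∀ v, HasDerivAt (fun t : ℝ => f (ξ + t • v)) (f' ξ v) 0)
    (hf'' : ∀ ξ ∈ Ω, ∀ v, HasDerivAt (fun t : ℝ => f' (ξ + t • v) v) (f'' ξ v) 0)
    {ξ v : E} {t : ℝ} (ht : ξ + t • v ∈ Ω) :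
    HasDerivAt (deriv fun s : ℝ => f (ξ + s • v)) (f'' (ξ + t • v) v) t := by
  have hnear : ∀ᶠ s in 𝓝 t, ξ + s • v ∈ Ω :=
    (continuous_const.add (continuous_id.smul continuous_const)).continuousAt.eventually_mem
      (hΩ.mem_nhds ht)
  refine (HasDerivAt.of_line_shift (F := fun η => f' η v) (hf'' _ ht v)).congr_of_eventuallyEq ?_
  filter_upwards [hnear] with s hs
  exact (HasDerivAt.of_line_shift (hf' _ hs v)).deriv

theorem concaveOn_of_deriv2_line_nonpos (hΩ : IsOpen Ω) (hconv : Convex ℝ Ω)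
    (hf' : ∀ ξ ∈ Ω, ∀ v, HasDerivAt (fun t : ℝ => f (ξ + t • v)) (f' ξ v) 0)
    (hf'' : ∀ ξ ∈ Ω, ∀ v, HasDerivAt (fun t : ℝ => f' (ξ + t • v) v) (f'' ξ v) 0)
    (hneg : ∀ ξ ∈ Ω, ∀ v, f'' ξ v ≤ 0) :
    ConcaveOn ℝ Ω f := by
  refine concaveOn_of_concaveOn_line hconv fun x _ v => ?_
  refine concaveOn_of_deriv2_nonpos' (hconv.line_preimage x v)
    (fun t ht => (HasDerivAt.of_line_shift (hf' _ ht v)).differentiableAt.differentiableWithinAt)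
    (fun t ht => (hasDerivAt_deriv_line hΩ hf' hf'' ht).differentiableAt.differentiableWithinAt)
    fun t ht => ?_
  rw [Function.iterate_succ_apply, Function.iterate_one,
    (hasDerivAt_deriv_line hΩ hf' hf'' ht).deriv]
  exact hneg _ ht v

end SecondDirectionalDerivative

theorem sq_integral_mul_le_integral_sq_mul {X : Type*} [MeasurableSpace X] {μ : Measure X}
    {Z q : X → ℝ} (hq : ∀ x, 0 ≤ q x) (hq1 : ∫ x, q x ∂μ = 1)
    (hZq : Integrable (fun x => Z x * q x) μ) (hZ2q : Integrable (fun x => Z x ^ 2 * q x) μ) :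
    (∫ x, Z x * q x ∂μ) ^ 2 ≤ ∫ x, Z x ^ 2 * q x ∂μ := by
  have hqi : Integrable q μ := Integrable.of_integral_ne_zero (by rw [hq1]; exact one_ne_zero)
  set m := ∫ x, Z x * q x ∂μ
  have hexpand : (fun x => (Z x - m) ^ 2 * q x)
      = fun x => Z x ^ 2 * q x - 2 * m * (Z x * q x) + m ^ 2 * q x := by
    funext x; ring
  have hvar : 0 ≤ ∫ x, (Z x - m) ^ 2 * q x ∂μ :=
    integral_nonneg fun x => mul_nonneg (sq_nonneg _) (hq x)
  rw [hexpand, integral_add (f := fun x => Z x ^ 2 * q x - 2 * m * (Z x * q x))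
      (hZ2q.sub (hZq.const_mul _)) (hqi.const_mul _),
    integral_sub hZ2q (hZq.const_mul _), integral_const_mul, integral_const_mul, hq1] at hvar
  nlinarith

section Falpha

variable {d : ℕ} {X : Type*} [MeasurableSpace X] (μ : Measure X) (α : ℝ)
  (h : X → EuclideanSpace ℝ (Fin d))

noncomputable def Fmom₁ (ξ v : EuclideanSpace ℝ (Fin d)) : ℝ :=
  ∫ x, ⟪v, h x⟫ * (1 + α * ⟪ξ, h x⟫) ^ (-(1/α) - 1) ∂μ

noncomputable def Fmom₂ (ξ v : EuclideanSpace ℝ (Fin d)) : ℝ :=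
  ∫ x, ⟪v, h x⟫ ^ 2 * (1 + α * ⟪ξ, h x⟫) ^ (-(1/α) - 2) ∂μ

noncomputable def Fvar (ξ v : EuclideanSpace ℝ (Fin d)) : ℝ :=
  (∫ x, Zstat α h ξ v x ^ 2 * Fdens μ α h ξ x ∂μ) - (∫ x, Zstat α h ξ v x * Fdens μ α h ξ x ∂μ) ^ 2

noncomputable def expFpotDeriv (ξ v : EuclideanSpace ℝ (Fin d)) : ℝ :=
  α * Real.exp (α * Fpot μ α h ξ) * Fmom₁ μ α h ξ v / Fint μ α h ξ

variable {μ α h} {ξ : EuclideanSpace ℝ (Fin d)}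

theorem Fint_pos [NeZero μ] (hp : ∀ x, 0 < 1 + α * ⟪ξ, h x⟫)
    (hi : Integrable (fun x => (1 + α * ⟪ξ, h x⟫) ^ (-(1/α))) μ) :
    0 < Fint μ α h ξ := by
  have hsupp : Function.support (fun x => (1 + α * ⟪ξ, h x⟫) ^ (-(1/α))) = Set.univ :=
    Set.eq_univ_of_forall fun x => (Real.rpow_pos_of_pos (hp x) _).ne'
  rw [Fint, integral_pos_iff_support_of_nonneg (fun x => (Real.rpow_pos_of_pos (hp x) _).le) hi,
    hsupp, Measure.measure_univ_pos]
  exact NeZero.ne μ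

theorem exp_Fpot (hG : 0 < Fint μ α h ξ) : Real.exp (Fpot μ α h ξ) = (Fint μ α h ξ)⁻¹ := by
  rw [Fpot, Real.exp_neg, Real.exp_log hG]

theorem integral_Fdens (hG : 0 < Fint μ α h ξ) : ∫ x, Fdens μ α h ξ x ∂μ = 1 := by
  simp only [Fdens]
  rw [integral_mul_const, exp_Fpot hG, ← Fint, mul_inv_cancel₀ hG.ne']

theorem integral_Zstat_mul_Fdens (v : EuclideanSpace ℝ (Fin d))
    (hp : ∀ x, 0 < 1 + α * ⟪ξ, h x⟫) (hG : 0 < Fint μ α h ξ) :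
    ∫ x, Zstat α h ξ v x * Fdens μ α h ξ x ∂μ = Fmom₁ μ α h ξ v / Fint μ α h ξ := by
  have hpt : ∀ x, Zstat α h ξ v x * Fdens μ α h ξ x
      = ⟪v, h x⟫ * (1 + α * ⟪ξ, h x⟫) ^ (-(1/α) - 1) * Real.exp (Fpot μ α h ξ) := by
    intro x
    rw [Zstat, Fdens, Real.rpow_sub (hp x), Real.rpow_one]
    field_simp
  simp only [hpt]
  rw [integral_mul_const, exp_Fpot hG, ← Fmom₁, div_eq_mul_inv]

theorem integral_Zstat_sq_mul_Fdens (v : EuclideanSpace ℝ (Fin d))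
    (hp : ∀ x, 0 < 1 + α * ⟪ξ, h x⟫) (hG : 0 < Fint μ α h ξ) :
    ∫ x, Zstat α h ξ v x ^ 2 * Fdens μ α h ξ x ∂μ = Fmom₂ μ α h ξ v / Fint μ α h ξ := by
  have hpt : ∀ x, Zstat α h ξ v x ^ 2 * Fdens μ α h ξ x
      = ⟪v, h x⟫ ^ 2 * (1 + α * ⟪ξ, h x⟫) ^ (-(1/α) - 2) * Real.exp (Fpot μ α h ξ) := by
    intro x
    rw [Zstat, Fdens, show (-(1/α) - 2 : ℝ) = -(1/α) - (2 : ℕ) by norm_num,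
      Real.rpow_sub (hp x), Real.rpow_natCast]
    field_simp
  simp only [hpt]
  rw [integral_mul_const, exp_Fpot hG, ← Fmom₂, div_eq_mul_inv]

theorem integrable_Zstat_pow_mul_Fdens (v : EuclideanSpace ℝ (Fin d)) {k : ℕ}
    (hi : Integrable (fun x => Zstat α h ξ v x ^ k * (1 + α * ⟪ξ, h x⟫) ^ (-(1/α))) μ) :
    Integrable (fun x => Zstat α h ξ v x ^ k * Fdens μ α h ξ x) μ := by
  simp only [Fdens, ← mul_assoc]
  exact hi.mul_const _

theorem Fvar_nonneg (v : EuclideanSpace ℝ (Fin d)) (hp : ∀ x, 0 < 1 + α * ⟪ξ, h x⟫)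
    (hG : 0 < Fint μ α h ξ)
    (hi : ∀ k ≤ 2, Integrable (fun x => Zstat α h ξ v x ^ k * (1 + α * ⟪ξ, h x⟫) ^ (-(1/α))) μ) :
    0 ≤ Fvar μ α h ξ v :=
  sub_nonneg.2 <| sq_integral_mul_le_integral_sq_mul
    (fun x => mul_nonneg (Real.rpow_nonneg (hp x).le _) (Real.exp_pos _).le) (integral_Fdens hG)
    (by simpa using integrable_Zstat_pow_mul_Fdens v (hi 1 (by norm_num)))
    (integrable_Zstat_pow_mul_Fdens v (hi 2 le_rfl))

theorem hasDerivAt_exp_mul_Fpot (v : EuclideanSpace ℝ (Fin d)) (hG : 0 < Fint μ α h ξ)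
    (hd : HasDerivAt (fun t : ℝ => Fint μ α h (ξ + t • v)) (-Fmom₁ μ α h ξ v) 0) :
    HasDerivAt (fun t : ℝ => Real.exp (α * Fpot μ α h (ξ + t • v))) (expFpotDeriv μ α h ξ v) 0 := by
  convert ((hd.log (by simpa using hG.ne')).const_mul (-α)).exp using 1
  · funext t
    simp only [Fpot, mul_neg, neg_mul]
  · simp only [expFpotDeriv, Fpot, zero_smul, add_zero, mul_neg, neg_mul]
    ring

theorem hasDerivAt_expFpotDeriv (v : EuclideanSpace ℝ (Fin d)) (hp : ∀ x, 0 < 1 + α * ⟪ξ, h x⟫)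
    (hG : 0 < Fint μ α h ξ)
    (hd₀ : HasDerivAt (fun t : ℝ => Fint μ α h (ξ + t • v)) (-Fmom₁ μ α h ξ v) 0)
    (hd₁ : HasDerivAt (fun t : ℝ => Fmom₁ μ α h (ξ + t • v) v) (-(1 + α) * Fmom₂ μ α h ξ v) 0) :
    HasDerivAt (fun t : ℝ => expFpotDeriv μ α h (ξ + t • v) v)
      (-(α * (1 + α)) * Real.exp (α * Fpot μ α h ξ) * Fvar μ α h ξ v) 0 := by
  have hquot := (((hasDerivAt_exp_mul_Fpot v hG hd₀).mul hd₁).div hd₀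
    (by simpa using hG.ne')).const_mul α
  have hfun : (fun t : ℝ => expFpotDeriv μ α h (ξ + t • v) v) = fun t => α *
      (Real.exp (α * Fpot μ α h (ξ + t • v)) * Fmom₁ μ α h (ξ + t • v) v /
        Fint μ α h (ξ + t • v)) :=
    funext fun t => by rw [expFpotDeriv, mul_assoc, mul_div_assoc]
  rw [hfun]
  refine hquot.congr_deriv ?_
  simp only [Fvar, integral_Zstat_mul_Fdens v hp hG, integral_Zstat_sq_mul_Fdens v hp hG,
    expFpotDeriv, zero_smul, add_zero, Pi.mul_apply]
  field_simp
  ring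

end Falpha

theorem stmt13_general {d : ℕ} {X : Type*} [MeasurableSpace X] (μ : Measure X)
    [IsProbabilityMeasure μ] (α : ℝ) (hα : 0 < α)
    (h : X → EuclideanSpace ℝ (Fin d))
    (Ω : Set (EuclideanSpace ℝ (Fin d))) (hΩ : IsOpen Ω) (hconv : Convex ℝ Ω)
    (hpos : ∀ ξ ∈ Ω, ∀ x, 0 < 1 + α * ⟪ξ, h x⟫)
    (hint : ∀ ξ ∈ Ω, ∀ v : EuclideanSpace ℝ (Fin d), ∀ k : ℕ, k ≤ 2 →
      Integrable (fun x => Zstat α h ξ v x ^ k *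
        (1 + α * ⟪ξ, h x⟫) ^ (-(1/α))) μ)
    -- differentiation under the integral sign:
    (hDUI0 : ∀ ξ ∈ Ω, ∀ v : EuclideanSpace ℝ (Fin d),
      HasDerivAt (fun t : ℝ => Fint μ α h (ξ + t • v))
        (-∫ x, ⟪v, h x⟫ * (1 + α * ⟪ξ, h x⟫) ^ (-(1/α) - 1) ∂μ) 0)
    (hDUI1 : ∀ ξ ∈ Ω, ∀ v : EuclideanSpace ℝ (Fin d),
      HasDerivAt (fun t : ℝ =>
          ∫ x, ⟪v, h x⟫ * (1 + α * ⟪ξ + t • v, h x⟫) ^ (-(1/α) - 1) ∂μ)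
        (-(1 + α) *
          ∫ x, ⟪v, h x⟫ ^ 2 * (1 + α * ⟪ξ, h x⟫) ^ (-(1/α) - 2) ∂μ) 0) :
    (∀ ξ ∈ Ω, ∀ v : EuclideanSpace ℝ (Fin d),
      deriv (fun t : ℝ =>
          deriv (fun s : ℝ => Real.exp (α * Fpot μ α h (ξ + s • v))) t) 0 =
        -(α * (1 + α)) * Real.exp (α * Fpot μ α h ξ) *
          ((∫ x, Zstat α h ξ v x ^ 2 * Fdens μ α h ξ x ∂μ) -
            (∫ x, Zstat α h ξ v x * Fdens μ α h ξ x ∂μ) ^ 2)) ∧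
    ConcaveOn ℝ Ω (fun ξ => Real.exp (α * Fpot μ α h ξ)) := by
  have hG : ∀ ξ ∈ Ω, 0 < Fint μ α h ξ := fun ξ hξ =>
    Fint_pos (hpos ξ hξ) (by simpa using hint ξ hξ 0 0 (by norm_num))
  have hd₁ : ∀ ξ ∈ Ω, ∀ v, HasDerivAt (fun t : ℝ => Real.exp (α * Fpot μ α h (ξ + t • v)))
      (expFpotDeriv μ α h ξ v) 0 := fun ξ hξ v =>
    hasDerivAt_exp_mul_Fpot v (hG ξ hξ) (hDUI0 ξ hξ v)
  have hd₂ : ∀ ξ ∈ Ω, ∀ v, HasDerivAt (fun t : ℝ => expFpotDeriv μ α h (ξ + t • v) v)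
      (-(α * (1 + α)) * Real.exp (α * Fpot μ α h ξ) * Fvar μ α h ξ v) 0 := fun ξ hξ v =>
    hasDerivAt_expFpotDeriv v (hpos ξ hξ) (hG ξ hξ) (hDUI0 ξ hξ v) (hDUI1 ξ hξ v)
  refine ⟨fun ξ hξ v => ?_, concaveOn_of_deriv2_line_nonpos hΩ hconv hd₁ hd₂ fun ξ hξ v => ?_⟩
  · simpa [Fvar] using (hasDerivAt_deriv_line (f := fun η => Real.exp (α * Fpot μ α h η)) hΩ hd₁ hd₂
      (t := 0) (by simpa using hξ)).deriv
  · have hvar := Fvar_nonneg v (hpos ξ hξ) (hG ξ hξ) (hint ξ hξ v)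
    have hcoef : 0 < α * (1 + α) * Real.exp (α * Fpot μ α h ξ) := by positivity
    nlinarith

/-- for the `F^{(α)}`-family, the Hessian of `Φ = e^{αφ}` is
`-α(1+α) Φ(ξ) Cov_ξ(Z_ξ)` (as a quadratic form); in particular `Φ` is concave,
i.e. `φ` is `α`-exponentially concave on `Ω`. -/
theorem stmt13 {d : ℕ} {X : Type*} [MeasurableSpace X] (μ : Measure X)
    [IsProbabilityMeasure μ] (α : ℝ) (hα : 0 < α)
    (h : X → EuclideanSpace ℝ (Fin d)) (hmeas : Measurable h)
    (hh : ∀ x, ∀ i, 0 < h x i)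
    (Ω : Set (EuclideanSpace ℝ (Fin d))) (hΩ : IsOpen Ω) (hconv : Convex ℝ Ω)
    (hid : ∀ ξ ξ' : EuclideanSpace ℝ (Fin d),
      (∀ᵐ x ∂μ, ⟪ξ, h x⟫ = ⟪ξ', h x⟫) → ξ = ξ')
    (hpos : ∀ ξ ∈ Ω, ∀ x, 0 < 1 + α * ⟪ξ, h x⟫)
    (hint : ∀ ξ ∈ Ω, ∀ v : EuclideanSpace ℝ (Fin d), ∀ k : ℕ, k ≤ 2 →
      Integrable (fun x => Zstat α h ξ v x ^ k *
        (1 + α * ⟪ξ, h x⟫) ^ (-(1/α))) μ)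
    -- differentiation under the integral sign:
    (hDUI0 : ∀ ξ ∈ Ω, ∀ v : EuclideanSpace ℝ (Fin d),
      HasDerivAt (fun t : ℝ => Fint μ α h (ξ + t • v))
        (-∫ x, ⟪v, h x⟫ * (1 + α * ⟪ξ, h x⟫) ^ (-(1/α) - 1) ∂μ) 0)
    (hDUI1 : ∀ ξ ∈ Ω, ∀ v : EuclideanSpace ℝ (Fin d),
      HasDerivAt (fun t : ℝ =>
          ∫ x, ⟪v, h x⟫ * (1 + α * ⟪ξ + t • v, h x⟫) ^ (-(1/α) - 1) ∂μ)
        (-(1 + α) *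
          ∫ x, ⟪v, h x⟫ ^ 2 * (1 + α * ⟪ξ, h x⟫) ^ (-(1/α) - 2) ∂μ) 0) :
    (∀ ξ ∈ Ω, ∀ v : EuclideanSpace ℝ (Fin d),
      deriv (fun t : ℝ =>
          deriv (fun s : ℝ => Real.exp (α * Fpot μ α h (ξ + s • v))) t) 0 =
        -(α * (1 + α)) * Real.exp (α * Fpot μ α h ξ) *
          ((∫ x, Zstat α h ξ v x ^ 2 * Fdens μ α h ξ x ∂μ) -
            (∫ x, Zstat α h ξ v x * Fdens μ α h ξ x ∂μ) ^ 2)) ∧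
    ConcaveOn ℝ Ω (fun ξ => Real.exp (α * Fpot μ α h ξ)) :=
  stmt13_general μ α hα h Ω hΩ hconv hpos hint hDUI0 hDUI1
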